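/- arXiv:2212.12674 — 4 statements merged into one kernel-verified Lean document; each statement's English description precedes it below -/
import Mathlib

section
/- Let X, Y be finite sets, κ : X × Y → ℝ a function, and let S₁ ⊆ X, S₂ ⊆ Y be nonempty subsets. For x ∈ X and y ∈ Y, and for any u ∈ S₁, v ∈ S₂, define ε₁ = ‖K_{xS₂} - K_{uS₂}‖₂ and ε₂ = ‖K_{S₁y} - K_{S₁v}‖₂, where K_{xS₂} = (κ(x,w))_{w∈S₂} and K_{S₁y} = (κ(w,y))_{w∈S₁}. Then |κ(x,y) - K_{xS₂} K_{S₁S₂}⁺ K_{S₁y}| ≤ min over u ∈ S₁, v ∈ S₂ of (|κ(x,y) - κ(u,v)| + ε₁ + ε₂ + ‖K_{S₁S₂}⁺‖₂ · ε₁ ε₂). -/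
open Matrix
open scoped RealInnerProductSpace

/-- Euclidean norm of a vector. -/
noncomputable def evnorm {n : Type*} [Fintype n] (v : n → ℝ) : ℝ :=
  ‖(WithLp.equiv 2 (n → ℝ)).symm v‖

/-- Operator 2-norm of a real matrix (induced by Euclidean norms). -/
noncomputable def opNorm {m n : Type*} [Fintype m] [Fintype n] (A : Matrix m n ℝ) : ℝ :=
  letI := Classical.decEq n
  ‖LinearMap.toContinuousLinearMap (Matrix.toEuclideanLin A)‖

/-- The four Penrose conditions: `P` is the Moore–Penrose pseudoinverse of `A`. -/
def IsMoorePenrose {m n : Type*} [Fintype m] [Fintype n]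
    (A : Matrix m n ℝ) (P : Matrix n m ℝ) : Prop :=
  A * P * A = A ∧ P * A * P = P ∧ (A * P)ᵀ = A * P ∧ (P * A)ᵀ = P * A

/-- Entrywise max norm of a matrix. -/
noncomputable def maxNorm {m n : Type*} [Fintype m] [Fintype n] (A : Matrix m n ℝ) : ℝ :=
  ⨆ i, ⨆ j, |A i j|

lemma evnorm_nonneg' {n : Type*} [Fintype n] (v : n → ℝ) : 0 ≤ evnorm v := norm_nonneg _

lemma inner_eq_dot {n : Type*} [Fintype n] (a b : n → ℝ) :
    (inner ℝ ((WithLp.equiv 2 (n → ℝ)).symm a) ((WithLp.equiv 2 (n → ℝ)).symm b) : ℝ) = a ⬝ᵥ b := by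
  simp [PiLp.inner_apply, dotProduct, mul_comm]

lemma abs_dot_le {n : Type*} [Fintype n] (a b : n → ℝ) :
    |a ⬝ᵥ b| ≤ evnorm a * evnorm b := by
  have h := abs_real_inner_le_norm ((WithLp.equiv 2 (n → ℝ)).symm a)
    ((WithLp.equiv 2 (n → ℝ)).symm b)
  rwa [inner_eq_dot] at h

lemma dot_self_eq {n : Type*} [Fintype n] (a : n → ℝ) : a ⬝ᵥ a = evnorm a ^ 2 := by
  rw [← inner_eq_dot, real_inner_self_eq_norm_sq]; rfl

lemma evnorm_mulVec_le {m n : Type*} [Fintype m] [Fintype n] (A : Matrix m n ℝ) (w : n → ℝ) :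
    evnorm (A *ᵥ w) ≤ opNorm A * evnorm w := by
  classical
  have h := (LinearMap.toContinuousLinearMap (Matrix.toEuclideanLin A)).le_opNorm
    ((WithLp.equiv 2 (n → ℝ)).symm w)
  simpa [evnorm, opNorm, Matrix.toEuclideanLin_apply_piLp_toLp, WithLp.equiv_symm_apply] using h

lemma evnorm_proj_le {n : Type*} [Fintype n] (M : Matrix n n ℝ)
    (hsym : Mᵀ = M) (hid : M * M = M) (w : n → ℝ) :
    evnorm (M *ᵥ w) ≤ evnorm w := by
  set s := M *ᵥ w with hs
  have h1 : s ⬝ᵥ s = s ⬝ᵥ w := by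
    conv_lhs => rw [hs, Matrix.dotProduct_mulVec]
    congr 1
    rw [← Matrix.mulVec_transpose, hsym, hs, Matrix.mulVec_mulVec, hid]
  have h2 : evnorm s ^ 2 ≤ evnorm s * evnorm w := by
    rw [← dot_self_eq, h1]
    exact le_trans (le_abs_self _) (abs_dot_le s w)
  have hns := evnorm_nonneg' s
  have hnw := evnorm_nonneg' w
  nlinarith

lemma evnorm_single {n : Type*} [Fintype n] [DecidableEq n] (j : n) :
    evnorm (Pi.single j (1 : ℝ)) = 1 := by
  rw [evnorm, WithLp.equiv_symm_apply, PiLp.norm_toLp_single]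
  simp

theorem stmt3 {α β : Type*} (X : Finset α) (Y : Finset β) (κ : α → β → ℝ)
    (S₁ : Finset α) (S₂ : Finset β) (hS₁X : S₁ ⊆ X) (hS₂Y : S₂ ⊆ Y)
    (hS₁ : S₁.Nonempty) (hS₂ : S₂.Nonempty)
    (P : Matrix S₂ S₁ ℝ)
    (hP : IsMoorePenrose (Matrix.of fun (u : S₁) (v : S₂) => κ u v) P)
    (hK : (Matrix.of fun (u : S₁) (v : S₂) => κ u v) ≠ 0)
    (x : α) (hx : x ∈ X) (y : β) (hy : y ∈ Y) :
    |κ x y - (fun v : S₂ => κ x v) ⬝ᵥ P.mulVec (fun u : S₁ => κ u y)| ≤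
      S₁.inf' hS₁ fun u => S₂.inf' hS₂ fun v =>
        |κ x y - κ u v|
          + evnorm ((fun w : S₂ => κ x w) - fun w : S₂ => κ u w)
          + evnorm ((fun w : S₁ => κ w y) - fun w : S₁ => κ w v)
          + opNorm P * (evnorm ((fun w : S₂ => κ x w) - fun w : S₂ => κ u w)
              * evnorm ((fun w : S₁ => κ w y) - fun w : S₁ => κ w v)) := by
  classical
  set K : Matrix S₁ S₂ ℝ := Matrix.of fun (u : S₁) (v : S₂) => κ u v with hKdef
  obtain ⟨h1, h2, h3, h4⟩ := hP
  -- K*P and P*K are symmetric idempotents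
  have hKP : (K * P) * (K * P) = K * P := by
    rw [← Matrix.mul_assoc, Matrix.mul_assoc K P K, ← Matrix.mul_assoc, h1]
  have hPK : (P * K) * (P * K) = P * K := by
    rw [← Matrix.mul_assoc, Matrix.mul_assoc P K P, ← Matrix.mul_assoc, h2]
  apply Finset.le_inf'
  intro u hu
  apply Finset.le_inf'
  intro v hv
  set a : S₂ → ℝ := fun w : S₂ => κ x w with ha
  set b : S₁ → ℝ := fun w : S₁ => κ w y with hb
  set r : S₂ → ℝ := fun w : S₂ => κ u w with hr
  set c : S₁ → ℝ := fun w : S₁ => κ w v with hc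
  set e₁ : S₂ → ℝ := a - r with he₁
  set e₂ : S₁ → ℝ := b - c with he₂
  have hru : r = K ⟨u, hu⟩ := rfl
  have hcv : c = K *ᵥ Pi.single ⟨v, hv⟩ 1 := by
    funext w
    rw [Matrix.mulVec_single]
    simp [hKdef, hc]
  -- the main term equals κ u v
  have key : r ⬝ᵥ P *ᵥ c = κ u v := by
    have step1 : r ⬝ᵥ P *ᵥ c = (K *ᵥ (P *ᵥ c)) ⟨u, hu⟩ := rfl
    have step2 : K *ᵥ (P *ᵥ c) = (K * P * K) *ᵥ Pi.single ⟨v, hv⟩ 1 := by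
      rw [hcv, Matrix.mulVec_mulVec, Matrix.mulVec_mulVec]
    rw [step1, step2, h1, Matrix.mulVec_single]
    simp [hKdef]
  -- bound term 2
  have t2 : |e₁ ⬝ᵥ P *ᵥ c| ≤ evnorm e₁ := by
    have hc' : P *ᵥ c = (P * K) *ᵥ Pi.single ⟨v, hv⟩ 1 := by
      rw [hcv, Matrix.mulVec_mulVec]
    calc |e₁ ⬝ᵥ P *ᵥ c| ≤ evnorm e₁ * evnorm (P *ᵥ c) := abs_dot_le _ _
    _ ≤ evnorm e₁ * 1 := by
        apply mul_le_mul_of_nonneg_left _ (evnorm_nonneg' _)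
        rw [hc']
        calc evnorm ((P * K) *ᵥ Pi.single ⟨v, hv⟩ 1) ≤ evnorm (Pi.single (⟨v, hv⟩ : S₂) (1:ℝ)) :=
          evnorm_proj_le _ h4 hPK _
        _ = 1 := evnorm_single _
    _ = evnorm e₁ := mul_one _
  -- bound term 3
  have t3 : |r ⬝ᵥ P *ᵥ e₂| ≤ evnorm e₂ := by
    have hre : r ⬝ᵥ P *ᵥ e₂ = Pi.single (⟨u, hu⟩ : S₁) (1:ℝ) ⬝ᵥ ((K * P) *ᵥ e₂) := by
      rw [single_dotProduct, one_mul, ← Matrix.mulVec_mulVec]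
      rfl
    calc |r ⬝ᵥ P *ᵥ e₂| = |Pi.single (⟨u, hu⟩ : S₁) (1:ℝ) ⬝ᵥ ((K * P) *ᵥ e₂)| := by rw [hre]
    _ ≤ evnorm (Pi.single (⟨u, hu⟩ : S₁) (1:ℝ)) * evnorm ((K * P) *ᵥ e₂) := abs_dot_le _ _
    _ = evnorm ((K * P) *ᵥ e₂) := by rw [evnorm_single, one_mul]
    _ ≤ evnorm e₂ := evnorm_proj_le _ h3 hKP _
  -- bound term 4
  have t4 : |e₁ ⬝ᵥ P *ᵥ e₂| ≤ opNorm P * (evnorm e₁ * evnorm e₂) := by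
    calc |e₁ ⬝ᵥ P *ᵥ e₂| ≤ evnorm e₁ * evnorm (P *ᵥ e₂) := abs_dot_le _ _
    _ ≤ evnorm e₁ * (opNorm P * evnorm e₂) :=
        mul_le_mul_of_nonneg_left (evnorm_mulVec_le _ _) (evnorm_nonneg' _)
    _ = opNorm P * (evnorm e₁ * evnorm e₂) := by ring
  -- decomposition
  have decomp : a ⬝ᵥ P *ᵥ b = κ u v + e₁ ⬝ᵥ P *ᵥ c + r ⬝ᵥ P *ᵥ e₂ + e₁ ⬝ᵥ P *ᵥ e₂ := by
    have hab : a = r + e₁ := by rw [he₁]; ring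
    have hbb : b = c + e₂ := by rw [he₂]; ring
    rw [← key]
    conv_lhs => rw [hab, hbb]
    rw [Matrix.mulVec_add, dotProduct_add, add_dotProduct,
      add_dotProduct]
    ring
  have habs : |κ x y - a ⬝ᵥ P *ᵥ b| ≤
      |κ x y - κ u v| + |e₁ ⬝ᵥ P *ᵥ c| + |r ⬝ᵥ P *ᵥ e₂| + |e₁ ⬝ᵥ P *ᵥ e₂| := by
    rw [decomp, show κ x y - (κ u v + e₁ ⬝ᵥ P *ᵥ c + r ⬝ᵥ P *ᵥ e₂ + e₁ ⬝ᵥ P *ᵥ e₂)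
        = (κ x y - κ u v) + -(e₁ ⬝ᵥ P *ᵥ c) + -(r ⬝ᵥ P *ᵥ e₂) + -(e₁ ⬝ᵥ P *ᵥ e₂) from by ring]
    refine (abs_add_le _ _).trans (add_le_add ((abs_add_le _ _).trans (add_le_add
      ((abs_add_le _ _).trans (add_le_add le_rfl (abs_neg _).le)) (abs_neg _).le)) (abs_neg _).le)
  refine le_trans habs ?_
  have := add_le_add (add_le_add (add_le_add (le_refl |κ x y - κ u v|) t2) t3) t4
  exact this
end

section
/- Let X, Y be finite sets, κ : X × Y → ℝ, and S₁ ⊆ X nonempty. Let Q = K_{S₁Y}⁺ K_{S₁Y}. Then ‖K_{XY} - K_{XY} Q‖_max ≤ max over x ∈ X, y ∈ Y of min over u ∈ S₁ of (|κ(x,y) - κ(u,y)| + ‖K_{xY} - K_{uY}‖₂), where K_{xY} = (κ(x,w))_{w∈Y}. -/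
open Matrix

lemma evnorm_eq_sqrt {n : Type*} [Fintype n] (v : n → ℝ) :
    evnorm v = Real.sqrt (∑ i, (v i) ^ 2) := by
  rw [evnorm, EuclideanSpace.norm_eq]
  congr 1
  refine Finset.sum_congr rfl fun i _ => ?_
  rw [Real.norm_eq_abs, sq_abs]
  rfl

/-- abs of a sum `∑ v w * q w` bounded by product of Euclidean norms. -/
lemma abs_sum_mul_le {n : Type*} [Fintype n] (v q : n → ℝ) :
    |∑ w, v w * q w| ≤ Real.sqrt (∑ w, (v w) ^ 2) * Real.sqrt (∑ w, (q w) ^ 2) := by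
  have h1 := Real.sum_mul_le_sqrt_mul_sqrt Finset.univ v q
  have h2 := Real.sum_mul_le_sqrt_mul_sqrt Finset.univ (fun w => -v w) q
  simp only [neg_mul, Finset.sum_neg_distrib, neg_sq] at h2
  rw [abs_le]
  constructor <;> linarith

theorem stmt6 {α β : Type*} (X : Finset α) (Y : Finset β) (κ : α → β → ℝ)
    (S₁ : Finset α) (hS₁X : S₁ ⊆ X)
    (hX : X.Nonempty) (hY : Y.Nonempty) (hS₁ : S₁.Nonempty)
    (P : Matrix Y S₁ ℝ)
    (hP : IsMoorePenrose (Matrix.of fun (u : S₁) (y : Y) => κ u y) P) :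
    maxNorm ((Matrix.of fun (x : X) (y : Y) => κ x y)
        - (Matrix.of fun (x : X) (y : Y) => κ x y)
            * (P * (Matrix.of fun (u : S₁) (y : Y) => κ u y))) ≤
      X.sup' hX fun x => Y.sup' hY fun y =>
        S₁.inf' hS₁ fun u =>
          |κ x y - κ u y|
            + evnorm ((fun w : Y => κ x w) - fun w : Y => κ u w) := by
  classical
  set K : Matrix S₁ Y ℝ := Matrix.of fun (u : S₁) (y : Y) => κ u y with hK
  set Q : Matrix Y Y ℝ := P * K with hQ
  obtain ⟨h1, h2, h3, h4⟩ := hP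
  -- K * Q = K
  have hKQ : K * Q = K := by rw [hQ, ← Matrix.mul_assoc, h1]
  -- Q symmetric
  have hQsym : Qᵀ = Q := h4
  -- Q idempotent
  have hQQ : Q * Q = Q := by
    rw [hQ, Matrix.mul_assoc, ← Matrix.mul_assoc K P K, h1]
  -- column norm of Q bounded by 1
  have hcol : ∀ y : Y, Real.sqrt (∑ w, (Q w y) ^ 2) ≤ 1 := by
    intro y
    have hsum : ∑ w, (Q w y) ^ 2 = Q y y := by
      have : (Q * Q) y y = ∑ w, (Q w y) ^ 2 := by
        have := congrFun (congrFun hQsym.symm y) y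
        rw [Matrix.mul_apply]
        calc ∑ w, Q y w * Q w y = ∑ w, Q w y * Q w y := by
              refine Finset.sum_congr rfl fun w _ => ?_
              have := congrFun (congrFun hQsym w) y
              simp only [Matrix.transpose_apply] at this
              rw [this]
          _ = ∑ w, (Q w y) ^ 2 := by simp [sq]
      rw [← this, hQQ]
    rw [hsum]
    have hnn : (0:ℝ) ≤ Q y y := by
      rw [← hsum]; positivity
    have hle : Q y y ≤ Real.sqrt (Q y y) := by
      have h1' : (Q y y) ^ 2 ≤ ∑ w, (Q w y) ^ 2 :=
        Finset.single_le_sum (f := fun w => (Q w y) ^ 2)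
          (fun w _ => sq_nonneg _) (Finset.mem_univ y)
      rw [hsum] at h1'
      calc Q y y = Real.sqrt ((Q y y) ^ 2) := by
            rw [Real.sqrt_sq hnn]
        _ ≤ Real.sqrt (Q y y) := Real.sqrt_le_sqrt h1'
    nlinarith [Real.sqrt_nonneg (Q y y), Real.sq_sqrt hnn]
  have hcol' : ∀ y : Y, ∀ v : Y → ℝ,
      |∑ w, v w * Q w y| ≤ Real.sqrt (∑ w, (v w) ^ 2) := by
    intro y v
    calc |∑ w, v w * Q w y| ≤
        Real.sqrt (∑ w, (v w) ^ 2) * Real.sqrt (∑ w, (Q w y) ^ 2) :=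
          abs_sum_mul_le v (fun w => Q w y)
      _ ≤ Real.sqrt (∑ w, (v w) ^ 2) * 1 := by
          exact mul_le_mul_of_nonneg_left (hcol y) (Real.sqrt_nonneg _)
      _ = _ := mul_one _
  -- entrywise bound
  have hentry : ∀ (x : X) (y : Y) (u : S₁),
      |κ (x:α) (y:β) - ∑ w : Y, κ (x:α) (w:β) * Q w y| ≤
        |κ x y - κ u y| + evnorm ((fun w : Y => κ (x:α) w) - fun w : Y => κ (u:α) w) := by
    intro x y u
    have hu : (κ (u:α) (y:β)) = ∑ w : Y, κ (u:α) (w:β) * Q w y := by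
      have := congrFun (congrFun hKQ u) y
      rw [Matrix.mul_apply] at this
      exact this.symm
    have key : κ (x:α) (y:β) - ∑ w : Y, κ (x:α) (w:β) * Q w y
        = (κ x y - κ u y) - ∑ w : Y, (κ (x:α) (w:β) - κ (u:α) (w:β)) * Q w y := by
      rw [hu]
      simp only [sub_mul, Finset.sum_sub_distrib]
      ring
    rw [key, evnorm_eq_sqrt]
    calc |(κ x y - κ u y) - ∑ w : Y, (κ (x:α) (w:β) - κ (u:α) (w:β)) * Q w y|
        ≤ |κ x y - κ u y| + |∑ w : Y, (κ (x:α) (w:β) - κ (u:α) (w:β)) * Q w y| :=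
          abs_sub _ _
      _ ≤ |κ x y - κ u y| +
          Real.sqrt (∑ w : Y, ((κ (x:α) (w:β) - κ (u:α) (w:β))) ^ 2) := by
          exact add_le_add_right (hcol' y _) _
      _ = _ := by congr 1
  -- assemble
  have : Nonempty ↥X := ⟨⟨hX.choose, hX.choose_spec⟩⟩
  have : Nonempty ↥Y := ⟨⟨hY.choose, hY.choose_spec⟩⟩
  unfold maxNorm
  refine ciSup_le fun x => ciSup_le fun y => ?_
  have hxy : |((Matrix.of fun (x : X) (y : Y) => κ x y)
        - (Matrix.of fun (x : X) (y : Y) => κ x y) * Q) x y|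
      = |κ (x:α) (y:β) - ∑ w : Y, κ (x:α) (w:β) * Q w y| := by
    simp [Matrix.sub_apply, Matrix.mul_apply]
  refine le_trans ?_ (Finset.le_sup' _ x.2)
  refine le_trans ?_ (Finset.le_sup' _ y.2)
  refine Finset.le_inf' hS₁ _ fun u hu => ?_
  rw [hxy]
  exact hentry x y ⟨u, hu⟩
end

section
/- Let X, Y be finite sets, κ : X × Y → ℝ, S ⊆ Y nonempty, and suppose the matrix K_{XS} admits a factorization K_{XS} = U K_{𝓘S} where 𝓘 ⊆ X with |𝓘| = r, K_{𝓘S} is the submatrix of K_{XS} with rows in 𝓘, and U is an m-by-r matrix (m = |X|) whose rows indexed by 𝓘 form the identity and whose entries satisfy ‖U‖_max ≤ 2. Then ‖K_{XY} - U K_{𝓘Y}‖_max ≤ E(X) + 2r·E(𝓘), where E(Z) = max over x ∈ Z, y ∈ Y of min over v ∈ S of (|κ(x,y) - κ(x,v)| + ‖K_{Xy} - K_{Xv}‖₂), and K_{Xy} = (κ(w,y))_{w∈X}. -/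
open Matrix

lemma abs_le_evnorm {n : Type*} [Fintype n] (v : n → ℝ) (i : n) : |v i| ≤ evnorm v := by
  have h : evnorm v = Real.sqrt (∑ j, ‖v j‖ ^ 2) := EuclideanSpace.norm_eq _
  rw [h]
  have h1 : |v i| = Real.sqrt (‖v i‖ ^ 2) := by
    rw [Real.sqrt_sq_eq_abs, abs_norm, Real.norm_eq_abs]
  rw [h1]
  apply Real.sqrt_le_sqrt
  exact Finset.single_le_sum (f := fun j => ‖v j‖ ^ 2) (fun j _ => by positivity)
    (Finset.mem_univ i)

lemma abs_le_maxNorm {m n : Type*} [Fintype m] [Fintype n] (A : Matrix m n ℝ) (i : m) (j : n) :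
    |A i j| ≤ maxNorm A := by
  have h1 : |A i j| ≤ ⨆ j, |A i j| :=
    le_ciSup (Set.Finite.bddAbove (Set.finite_range fun j => |A i j|)) j
  have h2 : (⨆ j, |A i j|) ≤ ⨆ i, ⨆ j, |A i j| :=
    le_ciSup (Set.Finite.bddAbove (Set.finite_range fun i => ⨆ j, |A i j|)) i
  exact h1.trans h2

lemma maxNorm_le {m n : Type*} [Fintype m] [Fintype n] [Nonempty m] [Nonempty n]
    (A : Matrix m n ℝ) {c : ℝ} (h : ∀ i j, |A i j| ≤ c) : maxNorm A ≤ c :=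
  ciSup_le fun i => ciSup_le fun j => h i j

theorem stmt8 {α β : Type*} [DecidableEq α] (X : Finset α) (Y : Finset β) (κ : α → β → ℝ)
    (S : Finset β) (hSY : S ⊆ Y) (hS : S.Nonempty)
    (I : Finset α) (hIX : I ⊆ X) (hI : I.Nonempty)
    (hX : X.Nonempty) (hY : Y.Nonempty)
    (r : ℕ) (hr : r = I.card)
    (U : Matrix X I ℝ)
    (hUid : ∀ i j : I, U ⟨i.1, hIX i.2⟩ j = if i = j then 1 else 0)
    (hUmax : maxNorm U ≤ 2)
    (hID : (Matrix.of fun (x : X) (v : S) => κ x v)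
        = U * (Matrix.of fun (i : I) (v : S) => κ i v)) :
    maxNorm ((Matrix.of fun (x : X) (y : Y) => κ x y)
        - U * (Matrix.of fun (i : I) (y : Y) => κ i y)) ≤
      (X.sup' hX fun x => Y.sup' hY fun y => S.inf' hS fun v =>
          |κ x y - κ x v| + evnorm ((fun w : X => κ w y) - fun w : X => κ w v))
        + 2 * r * (I.sup' hI fun x => Y.sup' hY fun y => S.inf' hS fun v =>
          |κ x y - κ x v| + evnorm ((fun w : X => κ w y) - fun w : X => κ w v)) := by
  haveI : Nonempty X := ⟨⟨hX.choose, hX.choose_spec⟩⟩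
  haveI : Nonempty Y := ⟨⟨hY.choose, hY.choose_spec⟩⟩
  set g : α → β → ℝ := fun x y => S.inf' hS fun v =>
      |κ x y - κ x v| + evnorm ((fun w : X => κ w y) - fun w : X => κ w v) with hg
  set EX : ℝ := X.sup' hX fun x => Y.sup' hY fun y => g x y with hEX
  set EI : ℝ := I.sup' hI fun x => Y.sup' hY fun y => g x y with hEI
  have hEIX : EI ≤ EX := by
    apply Finset.sup'_le
    intro i hi
    exact Finset.le_sup' (f := fun x => Y.sup' hY fun y => g x y) (hIX hi)
  apply maxNorm_le
  intro x y
  obtain ⟨i₀, hi₀⟩ := hI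
  obtain ⟨v, hv, hvf⟩ := S.exists_mem_eq_inf' hS
    (fun v => |κ i₀ y - κ i₀ v| + evnorm ((fun w : X => κ w y) - fun w : X => κ w v))
  set b : ℝ := evnorm ((fun w : X => κ w (y : β)) - fun w : X => κ w v) with hb
  have hb_nonneg : 0 ≤ b := norm_nonneg _
  have hb_le : b ≤ g i₀ y := by
    rw [hg]; dsimp only
    rw [hvf]
    have := abs_nonneg (κ i₀ (y : β) - κ i₀ v)
    linarith
  have hgEI : g i₀ (y : β) ≤ EI := by
    calc g i₀ (y:β) ≤ Y.sup' hY fun y => g i₀ y := Finset.le_sup' (g i₀) y.2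
    _ ≤ EI := Finset.le_sup' (f := fun x => Y.sup' hY fun y => g x y) hi₀
  have hbEI : b ≤ EI := hb_le.trans hgEI
  -- entry bound on column difference
  have hentry : ∀ w : X, |κ (w : α) (y:β) - κ (w:α) v| ≤ b := by
    intro w
    have := abs_le_evnorm ((fun w : X => κ w (y : β)) - fun w : X => κ w v) w
    simpa using this
  -- interpolation identity
  have hxv : κ (x : α) v = ∑ j : I, U x j * κ (j : α) v := by
    have := congrFun (congrFun hID x) ⟨v, hv⟩
    simpa [Matrix.mul_apply] using this
  have hRentry : ((Matrix.of fun (x : X) (y : Y) => κ x y)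
      - U * (Matrix.of fun (i : I) (y : Y) => κ i y)) x y
      = (κ (x:α) (y:β) - κ (x:α) v) + ∑ j : I, U x j * (κ (j:α) v - κ (j:α) (y:β)) := by
    have hsum : ∑ j : I, U x j * (κ (j:α) v - κ (j:α) (y:β))
        = (∑ j : I, U x j * κ (j:α) v) - ∑ j : I, U x j * κ (j:α) (y:β) := by
      rw [← Finset.sum_sub_distrib]
      exact Finset.sum_congr rfl fun j _ => mul_sub _ _ _
    simp only [Matrix.sub_apply, Matrix.mul_apply, Matrix.of_apply]
    rw [hsum, ← hxv]
    ring
  rw [hRentry]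
  have hsumbound : |∑ j : I, U x j * (κ (j:α) v - κ (j:α) (y:β))| ≤ (r : ℝ) * (2 * b) := by
    calc |∑ j : I, U x j * (κ (j:α) v - κ (j:α) (y:β))|
        ≤ ∑ j : I, |U x j * (κ (j:α) v - κ (j:α) (y:β))| := Finset.abs_sum_le_sum_abs _ _
      _ ≤ ∑ _j : I, 2 * b := by
          apply Finset.sum_le_sum
          intro j _
          rw [abs_mul]
          have hU : |U x j| ≤ 2 := (abs_le_maxNorm U x j).trans hUmax
          have hk : |κ (j:α) v - κ (j:α) (y:β)| ≤ b := by
            rw [abs_sub_comm]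
            exact hentry ⟨j, hIX j.2⟩
          exact mul_le_mul hU hk (abs_nonneg _) (by norm_num)
      _ = (Fintype.card I : ℝ) * (2 * b) := by
          rw [Finset.sum_const, nsmul_eq_mul, Finset.card_univ]
      _ = (r : ℝ) * (2 * b) := by rw [Fintype.card_coe, ← hr]
  have habs : |(κ (x:α) (y:β) - κ (x:α) v) + ∑ j : I, U x j * (κ (j:α) v - κ (j:α) (y:β))|
      ≤ b + (r : ℝ) * (2 * b) :=
    (abs_add_le _ _).trans (add_le_add (hentry x) hsumbound)
  have hr0 : (0:ℝ) ≤ (r : ℝ) := Nat.cast_nonneg r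
  have h2rb : (r : ℝ) * (2 * b) ≤ 2 * (r : ℝ) * EI := by
    have := mul_le_mul_of_nonneg_left hbEI (by positivity : (0:ℝ) ≤ 2 * (r:ℝ))
    nlinarith
  linarith [hbEI.trans hEIX]
end

section
/- Let X, Y be finite subsets of ℝ^d, κ : X × Y → ℝ, S ⊆ Y nonempty, m = |X|, and suppose K_{XS} = U K_{𝓘S} is an interpolative decomposition with 𝓘 ⊆ X, |𝓘| = r, and ‖U‖_max ≤ 2 with the rows of U indexed by 𝓘 forming the identity. Suppose L_A satisfies |κ(x,y) - κ(x,v)| ≤ L_A |y-v| for all x ∈ X, y ∈ Y, v ∈ S; L_B satisfies the same bound with x restricted to 𝓘 and constant L_B; and L_C satisfies |κ(x,y) - κ(x,v)| ≤ L_C |y-v| for all x ∈ X, y ∈ Y, v ∈ S (used for the vector column differences). Let δ = max_{y∈Y} dist(y, S). Then ‖K_{XY} - U K_{𝓘Y}‖_max ≤ L_A δ + (1 + 2r)√m L_C δ + 2r L_B δ. -/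
open Matrix

theorem stmt9 {d : ℕ} [DecidableEq (EuclideanSpace ℝ (Fin d))] (X : Finset (EuclideanSpace ℝ (Fin d)))
    (Y : Finset (EuclideanSpace ℝ (Fin d)))
    (κ : EuclideanSpace ℝ (Fin d) → EuclideanSpace ℝ (Fin d) → ℝ)
    (S : Finset (EuclideanSpace ℝ (Fin d))) (hSY : S ⊆ Y) (hS : S.Nonempty)
    (I : Finset (EuclideanSpace ℝ (Fin d))) (hIX : I ⊆ X) (hI : I.Nonempty)
    (hX : X.Nonempty) (hY : Y.Nonempty)
    (m r : ℕ) (hm : m = X.card) (hr : r = I.card)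
    (U : Matrix X I ℝ)
    (hUid : ∀ i j : I, U ⟨i.1, hIX i.2⟩ j = if i = j then 1 else 0)
    (hUmax : maxNorm U ≤ 2)
    (hID : (Matrix.of fun (x : X) (v : S) => κ x v)
        = U * (Matrix.of fun (i : I) (v : S) => κ i v))
    (LA LB LC : ℝ)
    (hLA : ∀ x ∈ X, ∀ y ∈ Y, ∀ v ∈ S, |κ x y - κ x v| ≤ LA * dist y v)
    (hLB : ∀ x ∈ I, ∀ y ∈ Y, ∀ v ∈ S, |κ x y - κ x v| ≤ LB * dist y v)
    (hLC : ∀ x ∈ X, ∀ y ∈ Y, ∀ v ∈ S, |κ x y - κ x v| ≤ LC * dist y v)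
    (δ : ℝ) (hδ : δ = Y.sup' hY fun y => S.inf' hS fun v => dist y v) :
    maxNorm ((Matrix.of fun (x : X) (y : Y) => κ x y)
        - U * (Matrix.of fun (i : I) (y : Y) => κ i y)) ≤
      LA * δ + (1 + 2 * r) * Real.sqrt m * LC * δ + 2 * r * LB * δ := by

  -- witnesses achieving δ
  obtain ⟨y0, hy0, hy0eq⟩ := Finset.exists_mem_eq_sup' hY (fun y => S.inf' hS fun v => dist y v)
  obtain ⟨v0, hv0, hv0eq⟩ := Finset.exists_mem_eq_inf' hS (fun v => dist y0 v)
  have hδeq : δ = dist y0 v0 := by rw [hδ, hy0eq, hv0eq]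
  have hδ0 : 0 ≤ δ := hδeq ▸ dist_nonneg
  obtain ⟨x0, hx0⟩ := hX
  obtain ⟨i0, hi0⟩ := hI
  have hLAδ : 0 ≤ LA * δ := le_trans (abs_nonneg _) (hδeq ▸ hLA x0 hx0 y0 hy0 v0 hv0)
  have hLBδ : 0 ≤ LB * δ := le_trans (abs_nonneg _) (hδeq ▸ hLB i0 hi0 y0 hy0 v0 hv0)
  have hLCδ : 0 ≤ LC * δ := le_trans (abs_nonneg _) (hδeq ▸ hLC x0 hx0 y0 hy0 v0 hv0)
  -- for each y, a choice of closest v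
  have hchoose : ∀ y ∈ Y, ∃ v ∈ S, dist y v ≤ δ := by
    intro y hy
    obtain ⟨v, hv, hveq⟩ := Finset.exists_mem_eq_inf' hS (fun v => dist y v)
    refine ⟨v, hv, ?_⟩
    rw [hδ, ← hveq]
    exact Finset.le_sup' (fun y => S.inf' hS fun v => dist y v) hy
  have hmono : ∀ L, 0 ≤ L * δ → ∀ t : ℝ, 0 ≤ t → t ≤ δ → L * t ≤ L * δ := by
    intro L hLδ t ht htδ
    rcases le_or_gt 0 L with hL | hL
    · exact mul_le_mul_of_nonneg_left htδ hL
    · exact le_trans (mul_nonpos_of_nonpos_of_nonneg hL.le ht) hLδ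
  have hXne : Nonempty ↥X := ⟨⟨x0, hx0⟩⟩
  have hYne : Nonempty ↥Y := ⟨⟨y0, hy0⟩⟩
  have hU2 : ∀ (x : ↥X) (i : ↥I), |U x i| ≤ 2 := by
    intro x i
    refine le_trans ?_ hUmax
    refine le_trans (le_ciSup (f := fun j => |U x j|) (Set.Finite.bddAbove (Set.finite_range _)) i) ?_
    exact le_ciSup (f := fun x => ⨆ j, |U x j|) (Set.Finite.bddAbove (Set.finite_range _)) x
  refine ciSup_le fun x => ciSup_le fun y => ?_
  obtain ⟨v, hv, hvδ⟩ := hchoose y y.2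
  have hid := congrFun (congrFun hID x) ⟨v, hv⟩
  simp only [Matrix.mul_apply, Matrix.of_apply] at hid
  have hentry : ((Matrix.of fun (x : ↥X) (y : ↥Y) => κ x y)
      - U * (Matrix.of fun (i : ↥I) (y : ↥Y) => κ i y)) x y
      = (κ x y - κ x v) + ∑ i : ↥I, U x i * (κ i v - κ i y) := by
    simp only [Matrix.sub_apply, Matrix.mul_apply, Matrix.of_apply]
    rw [hid]
    have hsum : ∑ i : ↥I, U x i * (κ ↑i v - κ ↑i ↑y)
        = (∑ i : ↥I, U x i * κ ↑i v) - ∑ i : ↥I, U x i * κ ↑i ↑y := by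
      rw [← Finset.sum_sub_distrib]
      exact Finset.sum_congr rfl fun i _ => by ring
    rw [hsum]
    ring
  rw [hentry]
  have h1 : |κ ↑x ↑y - κ ↑x v| ≤ LA * δ :=
    le_trans (hLA x x.2 y y.2 v hv) (hmono LA hLAδ _ dist_nonneg hvδ)
  have h2 : |∑ i : ↥I, U x i * (κ ↑i v - κ ↑i ↑y)| ≤ 2 * r * (LB * δ) := by
    refine le_trans (Finset.abs_sum_le_sum_abs _ _) ?_
    have hterm : ∀ i : ↥I, |U x i * (κ ↑i v - κ ↑i ↑y)| ≤ 2 * (LB * δ) := by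
      intro i
      rw [abs_mul]
      have hb : |κ ↑i v - κ ↑i ↑y| ≤ LB * δ := by
        rw [abs_sub_comm]
        exact le_trans (hLB i i.2 y y.2 v hv) (hmono LB hLBδ _ dist_nonneg hvδ)
      exact mul_le_mul (hU2 x i) hb (abs_nonneg _) (by norm_num)
    calc ∑ i : ↥I, |U x i * (κ ↑i v - κ ↑i ↑y)| ≤ ∑ _i : ↥I, 2 * (LB * δ) :=
          Finset.sum_le_sum fun i _ => hterm i
      _ = (Fintype.card ↥I : ℝ) * (2 * (LB * δ)) := by
          rw [Finset.sum_const, nsmul_eq_mul, Finset.card_univ]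
      _ = 2 * r * (LB * δ) := by rw [Fintype.card_coe, ← hr]; ring
  have h3 : 0 ≤ (1 + 2 * r) * Real.sqrt m * LC * δ := by
    have : (0:ℝ) ≤ (1 + 2 * r) * Real.sqrt m :=
      mul_nonneg (by positivity) (Real.sqrt_nonneg _)
    calc (0:ℝ) = (1 + 2 * r) * Real.sqrt m * 0 := by ring
      _ ≤ (1 + 2 * r) * Real.sqrt m * (LC * δ) := mul_le_mul_of_nonneg_left hLCδ this
      _ = (1 + 2 * r) * Real.sqrt m * LC * δ := by ring
  calc |(κ ↑x ↑y - κ ↑x v) + ∑ i : ↥I, U x i * (κ ↑i v - κ ↑i ↑y)|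
      ≤ |κ ↑x ↑y - κ ↑x v| + |∑ i : ↥I, U x i * (κ ↑i v - κ ↑i ↑y)| := abs_add_le _ _
    _ ≤ LA * δ + 2 * r * (LB * δ) := add_le_add h1 h2
    _ ≤ LA * δ + (1 + 2 * r) * Real.sqrt m * LC * δ + 2 * r * LB * δ := by linarith
end
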